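/- arXiv:2303.10472 — 5 statements merged into one kernel-verified Lean document; each statement's English description precedes it below -/
import Mathlib

section
/- For the Cholesky parameterization C(λ) = diag(φ(s)) + L with L strictly lower triangular, the squared gradient norm satisfies ‖∇_λ f(t_λ(u))‖₂² = ‖g‖₂² + gᵀ Σ g + gᵀ U (Φ − I) g, where g = ∇f(t_λ(u)), U = diag(u₁²,…,u_d²), Φ = diag(φ'(s₁)²,…,φ'(s_d)²), and Σ = diag(Σ_{j≤1} u_j²,…,Σ_{j≤d} u_j²). -/
noncomputable section CholeskyAux
open ContinuousLinearMap

private abbrev CholPp (d : ℕ) := (Fin d → ℝ) × (Fin d → ℝ) × (Fin d → Fin d → ℝ)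

private noncomputable def cholAm (d : ℕ) (i : Fin d) : CholPp d →L[ℝ] ℝ :=
  (proj i).comp (fst ℝ (Fin d → ℝ) ((Fin d → ℝ) × (Fin d → Fin d → ℝ)))

private noncomputable def cholBs (d : ℕ) (i : Fin d) : CholPp d →L[ℝ] ℝ :=
  (proj i).comp ((fst ℝ (Fin d → ℝ) (Fin d → Fin d → ℝ)).comp
    (snd ℝ (Fin d → ℝ) ((Fin d → ℝ) × (Fin d → Fin d → ℝ))))

private noncomputable def cholCl (d : ℕ) (i j : Fin d) : CholPp d →L[ℝ] ℝ :=
  (proj j).comp ((proj i).comp ((snd ℝ (Fin d → ℝ) (Fin d → Fin d → ℝ)).comp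
    (snd ℝ (Fin d → ℝ) ((Fin d → ℝ) × (Fin d → Fin d → ℝ)))))

private noncomputable def cholDd (d : ℕ) (φ' : ℝ → ℝ) (u s : Fin d → ℝ) (i : Fin d) :
    CholPp d →L[ℝ] ℝ :=
  u i • φ' (s i) • cholBs d i + (∑ j ∈ Finset.Iio i, u j • cholCl d i j) + cholAm d i

private lemma chol_coord_hasFDerivAt {d : ℕ} (φ φ' : ℝ → ℝ) (u m s : Fin d → ℝ)
    (L : Fin d → Fin d → ℝ) (hφ : ∀ x, HasDerivAt φ (φ' x) x) (i : Fin d) :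
    HasFDerivAt (fun p : CholPp d =>
      φ (p.2.1 i) * u i + (∑ j ∈ Finset.Iio i, p.2.2 i j * u j) + p.1 i)
      (cholDd d φ' u s i) (m, s, L) :=
  ((((hφ (s i)).comp_hasFDerivAt (m, s, L) (cholBs d i).hasFDerivAt).mul_const (u i)).fun_add
    (HasFDerivAt.fun_sum fun j _ => ((cholCl d i j).hasFDerivAt).mul_const (u j))).fun_add
    (cholAm d i).hasFDerivAt

end CholeskyAux

/-- For the Cholesky parameterization `C(λ) = diag (φ s) + L` with `L`
strictly lower triangular, `λ = (m, s, L)`,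
`t_λ(u)ᵢ = φ(sᵢ) uᵢ + ∑_{j < i} Lᵢⱼ uⱼ + mᵢ`, the squared gradient norm
satisfies `‖∇_λ f(t_λ(u))‖₂² = ‖g‖₂² + gᵀ Σ g + gᵀ U (Φ − I) g`, i.e.
`= ∑ i gᵢ² + ∑ i (∑_{j ≤ i} uⱼ²) gᵢ² + ∑ i uᵢ² (φ'(sᵢ)² − 1) gᵢ²`. -/
theorem cholesky_gradient_norm_identity
    {d : ℕ} (f : (Fin d → ℝ) → ℝ) (φ φ' : ℝ → ℝ) (u m s : Fin d → ℝ)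
    (L : Fin d → Fin d → ℝ)
    (hφ : ∀ x, HasDerivAt φ (φ' x) x)
    (hf : DifferentiableAt ℝ f
      (fun i => φ (s i) * u i + (∑ j ∈ Finset.Iio i, L i j * u j) + m i)) :
    (∑ i, (fderiv ℝ
        (fun p : (Fin d → ℝ) × (Fin d → ℝ) × (Fin d → Fin d → ℝ) =>
          f (fun i => φ (p.2.1 i) * u i +
              (∑ j ∈ Finset.Iio i, p.2.2 i j * u j) + p.1 i)) (m, s, L)
        (Pi.single i 1, 0, 0)) ^ 2) +
      (∑ i, (fderiv ℝ
        (fun p : (Fin d → ℝ) × (Fin d → ℝ) × (Fin d → Fin d → ℝ) =>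
          f (fun i => φ (p.2.1 i) * u i +
              (∑ j ∈ Finset.Iio i, p.2.2 i j * u j) + p.1 i)) (m, s, L)
        (0, Pi.single i 1, 0)) ^ 2) +
      (∑ i, ∑ j ∈ Finset.Iio i, (fderiv ℝ
        (fun p : (Fin d → ℝ) × (Fin d → ℝ) × (Fin d → Fin d → ℝ) =>
          f (fun i => φ (p.2.1 i) * u i +
              (∑ j ∈ Finset.Iio i, p.2.2 i j * u j) + p.1 i)) (m, s, L)
        (0, 0, Pi.single i (Pi.single j 1))) ^ 2) =
    (∑ i, (fderiv ℝ f
        (fun i => φ (s i) * u i + (∑ j ∈ Finset.Iio i, L i j * u j) + m i)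
        (Pi.single i 1)) ^ 2) +
      (∑ i, (∑ j ∈ Finset.Iic i, (u j) ^ 2) *
        (fderiv ℝ f
          (fun i => φ (s i) * u i + (∑ j ∈ Finset.Iio i, L i j * u j) + m i)
          (Pi.single i 1)) ^ 2) +
      ∑ i, (u i) ^ 2 * ((φ' (s i)) ^ 2 - 1) *
        (fderiv ℝ f
          (fun i => φ (s i) * u i + (∑ j ∈ Finset.Iio i, L i j * u j) + m i)
          (Pi.single i 1)) ^ 2 := by
  set pt : Fin d → ℝ :=
    fun i => φ (s i) * u i + (∑ j ∈ Finset.Iio i, L i j * u j) + m i with hpt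
  set G := fderiv ℝ f pt with hG
  -- derivative of the reparameterization map
  have hT : HasFDerivAt
      (fun p : CholPp d => fun i =>
        φ (p.2.1 i) * u i + (∑ j ∈ Finset.Iio i, p.2.2 i j * u j) + p.1 i)
      (ContinuousLinearMap.pi (cholDd d φ' u s)) (m, s, L) := by
    refine hasFDerivAt_pi'.2 fun i => ?_
    simpa using chol_coord_hasFDerivAt φ φ' u m s L hφ i
  have hF : HasFDerivAt
      (fun p : CholPp d =>
        f (fun i => φ (p.2.1 i) * u i + (∑ j ∈ Finset.Iio i, p.2.2 i j * u j) + p.1 i))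
      (G.comp (ContinuousLinearMap.pi (cholDd d φ' u s))) (m, s, L) :=
    (hf.hasFDerivAt).comp (m, s, L) hT
  have hfd := hF.fderiv
  rw [hfd]
  -- evaluate the three kinds of directional derivatives
  have h1 : ∀ i : Fin d,
      (G.comp (ContinuousLinearMap.pi (cholDd d φ' u s))) (Pi.single i 1, 0, 0) = G (Pi.single i 1) := by
    intro i
    rw [ContinuousLinearMap.comp_apply]
    congr 1
    funext k
    simp [cholDd, cholAm, cholBs, cholCl]
  have h2 : ∀ i : Fin d,
      (G.comp (ContinuousLinearMap.pi (cholDd d φ' u s))) (0, Pi.single i 1, 0)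
        = (u i * φ' (s i)) * G (Pi.single i 1) := by
    intro i
    have hv : ContinuousLinearMap.pi (cholDd d φ' u s) (0, Pi.single i 1, 0)
        = (u i * φ' (s i)) • (Pi.single i 1 : Fin d → ℝ) := by
      funext k
      simp only [ContinuousLinearMap.pi_apply, cholDd, cholAm, cholBs, cholCl,
        ContinuousLinearMap.add_apply, ContinuousLinearMap.smul_apply,
        ContinuousLinearMap.comp_apply, ContinuousLinearMap.proj_apply,
        ContinuousLinearMap.coe_fst', ContinuousLinearMap.coe_snd',
        ContinuousLinearMap.sum_apply, Pi.smul_apply, Pi.single_apply,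
        Pi.zero_apply, smul_eq_mul]
      by_cases hk : k = i <;> simp [hk]
    rw [ContinuousLinearMap.comp_apply, hv, map_smul, smul_eq_mul]
  have h3 : ∀ i : Fin d, ∀ j ∈ Finset.Iio i,
      (G.comp (ContinuousLinearMap.pi (cholDd d φ' u s))) (0, 0, Pi.single i (Pi.single j 1))
        = u j * G (Pi.single i 1) := by
    intro i j hj
    have hji : j < i := Finset.mem_Iio.mp hj
    have hv : ContinuousLinearMap.pi (cholDd d φ' u s) (0, 0, Pi.single i (Pi.single j 1))
        = u j • (Pi.single i 1 : Fin d → ℝ) := by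
      funext k
      simp only [ContinuousLinearMap.pi_apply, cholDd, cholAm, cholBs, cholCl,
        ContinuousLinearMap.add_apply, ContinuousLinearMap.smul_apply,
        ContinuousLinearMap.comp_apply, ContinuousLinearMap.proj_apply,
        ContinuousLinearMap.coe_fst', ContinuousLinearMap.coe_snd',
        ContinuousLinearMap.sum_apply, Pi.smul_apply, Pi.single_apply,
        Pi.zero_apply, smul_eq_mul]
      by_cases hk : k = i
      · subst hk
        simp [Pi.single_apply, mul_ite, Finset.sum_ite_eq' (Finset.Iio k) j, hji]
      · simp [hk, Ne.symm hk]
    rw [ContinuousLinearMap.comp_apply, hv, map_smul, smul_eq_mul]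
  have e2 : (∑ i, (G.comp (ContinuousLinearMap.pi (cholDd d φ' u s))) (0, Pi.single i 1, 0) ^ 2)
      = ∑ i, (u i * φ' (s i) * G (Pi.single i 1)) ^ 2 :=
    Finset.sum_congr rfl fun i _ => by rw [h2 i]
  have e3 : (∑ i, ∑ j ∈ Finset.Iio i,
        (G.comp (ContinuousLinearMap.pi (cholDd d φ' u s))) (0, 0, Pi.single i (Pi.single j 1)) ^ 2)
      = ∑ i, ∑ j ∈ Finset.Iio i, (u j * G (Pi.single i 1)) ^ 2 :=
    Finset.sum_congr rfl fun i _ => Finset.sum_congr rfl fun j hj => by rw [h3 i j hj]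
  simp only [h1]
  rw [e2, e3]
  -- now pure algebra
  rw [add_assoc, add_assoc]
  congr 1
  rw [← Finset.sum_add_distrib, ← Finset.sum_add_distrib]
  refine Finset.sum_congr rfl fun i _ => ?_
  have : (∑ j ∈ Finset.Iio i, (u j * G (Pi.single i 1)) ^ 2)
      = (∑ j ∈ Finset.Iio i, (u j) ^ 2) * (G (Pi.single i 1)) ^ 2 := by
    rw [Finset.sum_mul]
    exact Finset.sum_congr rfl fun j _ => by ring
  rw [this, ← Finset.Iio_insert, Finset.sum_insert (by simp)]
  ring
end

section
/- For the mean-field parameterization with 1-Lipschitz diagonal conditioner φ, the squared gradient norm is bounded: ‖∇_λ f(t_λ(u))‖₂² ≤ (1 + ‖U‖_F) ‖∇f(t_λ(u))‖₂², where U = diag(u₁²,…,u_d²) so ‖U‖_F = sqrt(Σᵢ uᵢ⁴). -/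
/-- For the mean-field parameterization with a 1-Lipschitz diagonal
conditioner `φ` (i.e. `|φ'| ≤ 1`), the squared gradient norm is bounded:
`‖∇_λ f(t_λ(u))‖₂² ≤ (1 + ‖U‖_F) ‖∇f(t_λ(u))‖₂²`
where `‖U‖_F = sqrt (∑ i, uᵢ⁴)`. -/
theorem meanfield_gradient_norm_bound
    {d : ℕ} (f : (Fin d → ℝ) → ℝ) (φ φ' : ℝ → ℝ) (u m s : Fin d → ℝ)
    (hφ : ∀ x, HasDerivAt φ (φ' x) x)
    (hφ' : ∀ x, |φ' x| ≤ 1)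
    (hf : DifferentiableAt ℝ f (fun i => φ (s i) * u i + m i)) :
    (∑ i, (fderiv ℝ
        (fun p : (Fin d → ℝ) × (Fin d → ℝ) =>
          f (fun i => φ (p.2 i) * u i + p.1 i)) (m, s)
        (Pi.single i 1, 0)) ^ 2) +
      (∑ i, (fderiv ℝ
        (fun p : (Fin d → ℝ) × (Fin d → ℝ) =>
          f (fun i => φ (p.2 i) * u i + p.1 i)) (m, s)
        (0, Pi.single i 1)) ^ 2) ≤
    (1 + Real.sqrt (∑ i, (u i) ^ 4)) *
      ∑ i, (fderiv ℝ f (fun i => φ (s i) * u i + m i) (Pi.single i 1)) ^ 2 := by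
  set x0 : Fin d → ℝ := fun i => φ (s i) * u i + m i with hx0
  set Df := fderiv ℝ f x0 with hDf
  set L : ((Fin d → ℝ) × (Fin d → ℝ)) →L[ℝ] (Fin d → ℝ) :=
    ContinuousLinearMap.pi (fun i =>
      (φ' (s i) * u i) • ((ContinuousLinearMap.proj i).comp
          (ContinuousLinearMap.snd ℝ (Fin d → ℝ) (Fin d → ℝ))) +
        (ContinuousLinearMap.proj i).comp
          (ContinuousLinearMap.fst ℝ (Fin d → ℝ) (Fin d → ℝ))) with hL
  have hLapp : ∀ p : (Fin d → ℝ) × (Fin d → ℝ), ∀ i,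
      L p i = φ' (s i) * u i * p.2 i + p.1 i := by
    intro p i; simp [hL, mul_assoc]
  have hinner : HasFDerivAt
      (fun p : (Fin d → ℝ) × (Fin d → ℝ) => (fun i => φ (p.2 i) * u i + p.1 i)) L (m, s) := by
    rw [hasFDerivAt_pi']
    intro i
    have h1 : HasFDerivAt (fun p : (Fin d → ℝ) × (Fin d → ℝ) => p.2 i)
        ((ContinuousLinearMap.proj i).comp
          (ContinuousLinearMap.snd ℝ (Fin d → ℝ) (Fin d → ℝ))) (m, s) :=
      ((ContinuousLinearMap.proj i).comp
        (ContinuousLinearMap.snd ℝ (Fin d → ℝ) (Fin d → ℝ))).hasFDerivAt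
    have h2 : HasFDerivAt (fun p : (Fin d → ℝ) × (Fin d → ℝ) => φ (p.2 i))
        (φ' (s i) • ((ContinuousLinearMap.proj i).comp
          (ContinuousLinearMap.snd ℝ (Fin d → ℝ) (Fin d → ℝ)))) (m, s) :=
      HasDerivAt.comp_hasFDerivAt (m, s) (hφ (s i)) h1
    have h3 : HasFDerivAt (fun p : (Fin d → ℝ) × (Fin d → ℝ) => φ (p.2 i) * u i)
        (u i • (φ' (s i) • ((ContinuousLinearMap.proj i).comp
          (ContinuousLinearMap.snd ℝ (Fin d → ℝ) (Fin d → ℝ))))) (m, s) :=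
      h2.mul_const (u i)
    have h4 : HasFDerivAt (fun p : (Fin d → ℝ) × (Fin d → ℝ) => p.1 i)
        ((ContinuousLinearMap.proj i).comp
          (ContinuousLinearMap.fst ℝ (Fin d → ℝ) (Fin d → ℝ))) (m, s) :=
      ((ContinuousLinearMap.proj i).comp
        (ContinuousLinearMap.fst ℝ (Fin d → ℝ) (Fin d → ℝ))).hasFDerivAt
    have h5 := h3.add h4
    have heq : (φ' (s i) * u i) • ((ContinuousLinearMap.proj i).comp
          (ContinuousLinearMap.snd ℝ (Fin d → ℝ) (Fin d → ℝ)))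
        = u i • (φ' (s i) • ((ContinuousLinearMap.proj i).comp
          (ContinuousLinearMap.snd ℝ (Fin d → ℝ) (Fin d → ℝ)))) := by
      rw [smul_smul, mul_comm]
    rw [hL, ContinuousLinearMap.proj_pi, heq]
    exact h5
  have hcomp : HasFDerivAt
      (fun p : (Fin d → ℝ) × (Fin d → ℝ) => f (fun i => φ (p.2 i) * u i + p.1 i))
      (Df.comp L) (m, s) := hf.hasFDerivAt.comp (m, s) hinner
  rw [hcomp.fderiv]
  have hmval : ∀ i, (Df.comp L) (Pi.single i 1, 0) = Df (Pi.single i 1) := by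
    intro i
    rw [ContinuousLinearMap.comp_apply]
    congr 1
    funext j
    rw [hLapp]
    simp
  have hsval : ∀ i, (Df.comp L) ((0 : Fin d → ℝ), Pi.single i 1)
      = φ' (s i) * u i * Df (Pi.single i 1) := by
    intro i
    have hLval : L ((0 : Fin d → ℝ), Pi.single i 1)
        = (φ' (s i) * u i) • (Pi.single i 1 : Fin d → ℝ) := by
      funext j
      rw [hLapp]
      by_cases hji : j = i
      · subst hji; simp
      · simp [Pi.single_eq_of_ne hji]
    rw [ContinuousLinearMap.comp_apply, hLval, map_smul, smul_eq_mul]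
  simp only [hmval, hsval]
  have key : ∑ i, (φ' (s i) * u i * Df (Pi.single i 1)) ^ 2
      ≤ Real.sqrt (∑ j, (u j) ^ 4) * ∑ i, (Df (Pi.single i 1)) ^ 2 := by
    rw [Finset.mul_sum]
    apply Finset.sum_le_sum
    intro i _
    have h1 : (φ' (s i)) ^ 2 ≤ 1 := by
      have := hφ' (s i)
      nlinarith [abs_nonneg (φ' (s i)), sq_abs (φ' (s i))]
    have h2 : (u i) ^ 2 ≤ Real.sqrt (∑ j, (u j) ^ 4) := by
      have hle : (u i) ^ 4 ≤ ∑ j, (u j) ^ 4 :=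
        Finset.single_le_sum (f := fun j => (u j) ^ 4) (fun j _ => by positivity) (Finset.mem_univ i)
      calc (u i) ^ 2 = Real.sqrt ((u i) ^ 4) := by
            rw [show (u i) ^ 4 = ((u i) ^ 2) ^ 2 by ring, Real.sqrt_sq (sq_nonneg _)]
        _ ≤ _ := Real.sqrt_le_sqrt hle
    have h3 : (φ' (s i) * u i) ^ 2 ≤ Real.sqrt (∑ j, (u j) ^ 4) := by
      nlinarith [sq_nonneg (u i), sq_nonneg (φ' (s i))]
    calc (φ' (s i) * u i * Df (Pi.single i 1)) ^ 2
        = (φ' (s i) * u i) ^ 2 * (Df (Pi.single i 1)) ^ 2 := by ring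
      _ ≤ Real.sqrt (∑ j, (u j) ^ 4) * (Df (Pi.single i 1)) ^ 2 :=
          mul_le_mul_of_nonneg_right h3 (sq_nonneg _)
  rw [add_mul, one_mul]
  exact add_le_add (le_refl _) key
end

section
/- For the Cholesky parameterization with 1-Lipschitz diagonal conditioner φ, the squared gradient norm is bounded: ‖∇_λ f(t_λ(u))‖₂² ≤ (1 + ‖u‖₂²) ‖∇f(t_λ(u))‖₂². -/
set_option maxHeartbeats 1000000 in
/-- For the Cholesky parameterization with a 1-Lipschitz diagonal conditioner
`φ` (i.e. `|φ'| ≤ 1`), the squared gradient norm is bounded: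
`‖∇_λ f(t_λ(u))‖₂² ≤ (1 + ‖u‖₂²) ‖∇f(t_λ(u))‖₂²`. -/
theorem cholesky_gradient_norm_bound
    {d : ℕ} (f : (Fin d → ℝ) → ℝ) (φ φ' : ℝ → ℝ) (u m s : Fin d → ℝ)
    (L : Fin d → Fin d → ℝ)
    (hφ : ∀ x, HasDerivAt φ (φ' x) x)
    (hφ' : ∀ x, |φ' x| ≤ 1)
    (hf : DifferentiableAt ℝ f
      (fun i => φ (s i) * u i + (∑ j ∈ Finset.Iio i, L i j * u j) + m i)) :
    (∑ i, (fderiv ℝ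
        (fun p : (Fin d → ℝ) × (Fin d → ℝ) × (Fin d → Fin d → ℝ) =>
          f (fun i => φ (p.2.1 i) * u i +
              (∑ j ∈ Finset.Iio i, p.2.2 i j * u j) + p.1 i)) (m, s, L)
        (Pi.single i 1, 0, 0)) ^ 2) +
      (∑ i, (fderiv ℝ
        (fun p : (Fin d → ℝ) × (Fin d → ℝ) × (Fin d → Fin d → ℝ) =>
          f (fun i => φ (p.2.1 i) * u i +
              (∑ j ∈ Finset.Iio i, p.2.2 i j * u j) + p.1 i)) (m, s, L)
        (0, Pi.single i 1, 0)) ^ 2) +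
      (∑ i, ∑ j ∈ Finset.Iio i, (fderiv ℝ
        (fun p : (Fin d → ℝ) × (Fin d → ℝ) × (Fin d → Fin d → ℝ) =>
          f (fun i => φ (p.2.1 i) * u i +
              (∑ j ∈ Finset.Iio i, p.2.2 i j * u j) + p.1 i)) (m, s, L)
        (0, 0, Pi.single i (Pi.single j 1))) ^ 2) ≤
    (1 + ∑ j, (u j) ^ 2) *
      ∑ i, (fderiv ℝ f
        (fun i => φ (s i) * u i + (∑ j ∈ Finset.Iio i, L i j * u j) + m i)
        (Pi.single i 1)) ^ 2 := by
  classical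
  set x : Fin d → ℝ := fun i => φ (s i) * u i + (∑ j ∈ Finset.Iio i, L i j * u j) + m i with hx
  set f' := fderiv ℝ f x with hf'
  let πm : (Fin d → ℝ) × (Fin d → ℝ) × (Fin d → Fin d → ℝ) →L[ℝ] (Fin d → ℝ) := ContinuousLinearMap.fst ℝ _ _
  let πs : (Fin d → ℝ) × (Fin d → ℝ) × (Fin d → Fin d → ℝ) →L[ℝ] (Fin d → ℝ) :=
    (ContinuousLinearMap.fst ℝ _ _).comp (ContinuousLinearMap.snd ℝ _ _)
  let πL : (Fin d → ℝ) × (Fin d → ℝ) × (Fin d → Fin d → ℝ) →L[ℝ] (Fin d → Fin d → ℝ) :=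
    (ContinuousLinearMap.snd ℝ _ _).comp (ContinuousLinearMap.snd ℝ _ _)
  let A : Fin d → (((Fin d → ℝ) × (Fin d → ℝ) × (Fin d → Fin d → ℝ)) →L[ℝ] ℝ) := fun i =>
    (u i) • (φ' (s i) • ((ContinuousLinearMap.proj i).comp πs))
      + (∑ j ∈ Finset.Iio i,
          u j • ((ContinuousLinearMap.proj j).comp ((ContinuousLinearMap.proj i).comp πL)))
      + (ContinuousLinearMap.proj i).comp πm
  have hAi : ∀ i, HasFDerivAt
      (fun p : (Fin d → ℝ) × (Fin d → ℝ) × (Fin d → Fin d → ℝ) => φ (p.2.1 i) * u i + (∑ j ∈ Finset.Iio i, p.2.2 i j * u j) + p.1 i)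
      (A i) (m, s, L) := by
    intro i
    have h1 : HasFDerivAt (fun p : (Fin d → ℝ) × (Fin d → ℝ) × (Fin d → Fin d → ℝ) => φ (p.2.1 i))
        (φ' (s i) • ((ContinuousLinearMap.proj i).comp πs)) (m, s, L) :=
      HasDerivAt.comp_hasFDerivAt (f := fun p : (Fin d → ℝ) × (Fin d → ℝ) × (Fin d → Fin d → ℝ) => p.2.1 i) (m, s, L) (hφ (s i))
        (((ContinuousLinearMap.proj i).comp πs).hasFDerivAt)
    have h2 : HasFDerivAt (fun p : (Fin d → ℝ) × (Fin d → ℝ) × (Fin d → Fin d → ℝ) => ∑ j ∈ Finset.Iio i, p.2.2 i j * u j)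
        (∑ j ∈ Finset.Iio i,
          u j • ((ContinuousLinearMap.proj j).comp ((ContinuousLinearMap.proj i).comp πL)))
        (m, s, L) :=
      HasFDerivAt.fun_sum fun j _ =>
        (((ContinuousLinearMap.proj j).comp
          ((ContinuousLinearMap.proj i).comp πL)).hasFDerivAt).mul_const (u j)
    have h3 : HasFDerivAt (fun p : (Fin d → ℝ) × (Fin d → ℝ) × (Fin d → Fin d → ℝ) => p.1 i)
        ((ContinuousLinearMap.proj i).comp πm) (m, s, L) :=
      ((ContinuousLinearMap.proj i).comp πm).hasFDerivAt
    exact ((h1.mul_const (u i)).add h2).add h3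
  have hT : HasFDerivAt
      (fun (p : (Fin d → ℝ) × (Fin d → ℝ) × (Fin d → Fin d → ℝ)) (i : Fin d) =>
        φ (p.2.1 i) * u i + (∑ j ∈ Finset.Iio i, p.2.2 i j * u j) + p.1 i)
      (ContinuousLinearMap.pi A) (m, s, L) := hasFDerivAt_pi.2 hAi
  have hF : HasFDerivAt
      (fun p : (Fin d → ℝ) × (Fin d → ℝ) × (Fin d → Fin d → ℝ) => f (fun i =>
        φ (p.2.1 i) * u i + (∑ j ∈ Finset.Iio i, p.2.2 i j * u j) + p.1 i))
      (f'.comp (ContinuousLinearMap.pi A)) (m, s, L) :=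
    hf.hasFDerivAt.comp (m, s, L) hT
  have hfd := hF.fderiv
  -- Evaluate A at the three direction types
  have hAm : ∀ i i₀ : Fin d, A i ((Pi.single i₀ 1 : Fin d → ℝ), 0, 0) = (Pi.single i₀ 1 : Fin d → ℝ) i := by
    intro i i₀
    simp [A, πm, πs, πL, ContinuousLinearMap.coe_fst', ContinuousLinearMap.coe_snd']
  have hAs : ∀ i i₀ : Fin d, A i (0, (Pi.single i₀ 1 : Fin d → ℝ), 0)
      = (Pi.single i₀ (u i₀ * φ' (s i₀)) : Fin d → ℝ) i := by
    intro i i₀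
    by_cases h : i = i₀ <;>
      simp [A, πm, πs, πL, h, Pi.single_apply, smul_smul, ContinuousLinearMap.coe_fst', ContinuousLinearMap.coe_snd']
  have hAL : ∀ (i i₀ j₀ : Fin d), j₀ ∈ Finset.Iio i₀ →
      A i (0, 0, (Pi.single i₀ (Pi.single j₀ 1) : Fin d → Fin d → ℝ))
        = (Pi.single i₀ (u j₀) : Fin d → ℝ) i := by
    intro i i₀ j₀ hj
    by_cases h : i = i₀
    · subst h
      simp only [A, πm, πs, πL]
      simp [Pi.single_apply, Finset.sum_ite_eq', hj, Finset.mem_Iio, ContinuousLinearMap.coe_fst', ContinuousLinearMap.coe_snd']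
    · simp [A, πm, πs, πL, Pi.single_apply, h, Ne.symm h, ContinuousLinearMap.coe_fst', ContinuousLinearMap.coe_snd']
  -- rewrite fderiv applications
  have key : ∀ v : (Fin d → ℝ) × (Fin d → ℝ) × (Fin d → Fin d → ℝ), fderiv ℝ
      (fun p : (Fin d → ℝ) × (Fin d → ℝ) × (Fin d → Fin d → ℝ) => f (fun i =>
        φ (p.2.1 i) * u i + (∑ j ∈ Finset.Iio i, p.2.2 i j * u j) + p.1 i)) (m, s, L) v
      = f' (fun i => A i v) := by
    intro v
    rw [hfd]
    rfl
  have hsingle : ∀ (i₀ : Fin d) (c : ℝ), f' (Pi.single i₀ c) = c * f' (Pi.single i₀ 1) := by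
    intro i₀ c
    have : (Pi.single i₀ c : Fin d → ℝ) = c • (Pi.single i₀ 1 : Fin d → ℝ) := by
      funext k
      by_cases h : k = i₀ <;> simp [Pi.single_apply, h]
    rw [this, map_smul]
    rfl
  have e1 : ∀ i₀ : Fin d, fderiv ℝ
      (fun p : (Fin d → ℝ) × (Fin d → ℝ) × (Fin d → Fin d → ℝ) => f (fun i =>
        φ (p.2.1 i) * u i + (∑ j ∈ Finset.Iio i, p.2.2 i j * u j) + p.1 i)) (m, s, L)
      ((Pi.single i₀ 1 : Fin d → ℝ), 0, 0) = f' (Pi.single i₀ 1) := by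
    intro i₀
    rw [key]
    congr 1
    funext i
    exact hAm i i₀
  have e2 : ∀ i₀ : Fin d, fderiv ℝ
      (fun p : (Fin d → ℝ) × (Fin d → ℝ) × (Fin d → Fin d → ℝ) => f (fun i =>
        φ (p.2.1 i) * u i + (∑ j ∈ Finset.Iio i, p.2.2 i j * u j) + p.1 i)) (m, s, L)
      (0, (Pi.single i₀ 1 : Fin d → ℝ), 0) = u i₀ * φ' (s i₀) * f' (Pi.single i₀ 1) := by
    intro i₀
    rw [key]
    rw [show (fun i => A i (0, (Pi.single i₀ 1 : Fin d → ℝ), 0))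
        = Pi.single i₀ (u i₀ * φ' (s i₀)) from funext fun i => hAs i i₀]
    exact hsingle i₀ _
  have e3 : ∀ i₀ j₀ : Fin d, j₀ ∈ Finset.Iio i₀ → fderiv ℝ
      (fun p : (Fin d → ℝ) × (Fin d → ℝ) × (Fin d → Fin d → ℝ) => f (fun i =>
        φ (p.2.1 i) * u i + (∑ j ∈ Finset.Iio i, p.2.2 i j * u j) + p.1 i)) (m, s, L)
      (0, 0, (Pi.single i₀ (Pi.single j₀ 1) : Fin d → Fin d → ℝ))
      = u j₀ * f' (Pi.single i₀ 1) := by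
    intro i₀ j₀ hj
    rw [key]
    rw [show (fun i => A i (0, 0, (Pi.single i₀ (Pi.single j₀ 1) : Fin d → Fin d → ℝ)))
        = Pi.single i₀ (u j₀) from funext fun i => hAL i i₀ j₀ hj]
    exact hsingle i₀ _
  have E1 : (∑ i, (fderiv ℝ
      (fun p : (Fin d → ℝ) × (Fin d → ℝ) × (Fin d → Fin d → ℝ) =>
        f (fun i => φ (p.2.1 i) * u i +
            (∑ j ∈ Finset.Iio i, p.2.2 i j * u j) + p.1 i)) (m, s, L)
      (Pi.single i 1, 0, 0)) ^ 2) = ∑ i, (f' (Pi.single i 1)) ^ 2 :=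
    Finset.sum_congr rfl fun i _ => by rw [e1 i]
  have E2 : (∑ i, (fderiv ℝ
      (fun p : (Fin d → ℝ) × (Fin d → ℝ) × (Fin d → Fin d → ℝ) =>
        f (fun i => φ (p.2.1 i) * u i +
            (∑ j ∈ Finset.Iio i, p.2.2 i j * u j) + p.1 i)) (m, s, L)
      (0, Pi.single i 1, 0)) ^ 2)
      = ∑ i, (u i * φ' (s i) * f' (Pi.single i 1)) ^ 2 :=
    Finset.sum_congr rfl fun i _ => by rw [e2 i]
  have E3 : (∑ i, ∑ j ∈ Finset.Iio i, (fderiv ℝ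
      (fun p : (Fin d → ℝ) × (Fin d → ℝ) × (Fin d → Fin d → ℝ) =>
        f (fun i => φ (p.2.1 i) * u i +
            (∑ j ∈ Finset.Iio i, p.2.2 i j * u j) + p.1 i)) (m, s, L)
      (0, 0, Pi.single i (Pi.single j 1))) ^ 2)
      = ∑ i, ∑ j ∈ Finset.Iio i, (u j * f' (Pi.single i 1)) ^ 2 :=
    Finset.sum_congr rfl fun i _ =>
      Finset.sum_congr rfl fun j hj => by rw [e3 i j hj]
  rw [E1, E2, E3]
  set g : Fin d → ℝ := fun i => f' (Pi.single i 1) with hg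
  have hmain : ∀ i : Fin d,
      (u i * φ' (s i) * g i) ^ 2 + ∑ j ∈ Finset.Iio i, (u j * g i) ^ 2
        ≤ (∑ j, (u j) ^ 2) * g i ^ 2 := by
    intro i
    have h1 : (u i * φ' (s i) * g i) ^ 2 ≤ (u i) ^ 2 * g i ^ 2 := by
      have : (u i * φ' (s i)) ^ 2 ≤ (u i) ^ 2 := by
        rw [mul_pow]
        have habs : φ' (s i) ^ 2 ≤ 1 := by
          have h := abs_le.1 (hφ' (s i))
          nlinarith [h.1, h.2]
        nlinarith [sq_nonneg (u i)]
      nlinarith [sq_nonneg (g i)]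
    have h2 : ∑ j ∈ Finset.Iio i, (u j * g i) ^ 2
        = (∑ j ∈ Finset.Iio i, (u j) ^ 2) * g i ^ 2 := by
      rw [Finset.sum_mul]
      exact Finset.sum_congr rfl fun j _ => by ring
    have h3 : (u i) ^ 2 + ∑ j ∈ Finset.Iio i, (u j) ^ 2 ≤ ∑ j, (u j) ^ 2 := by
      have : (u i) ^ 2 + ∑ j ∈ Finset.Iio i, (u j) ^ 2
          = ∑ j ∈ insert i (Finset.Iio i), (u j) ^ 2 := by
        rw [Finset.sum_insert (by simp)]
      rw [this]
      exact Finset.sum_le_sum_of_subset_of_nonneg (Finset.subset_univ _)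
        (fun j _ _ => sq_nonneg _)
    calc (u i * φ' (s i) * g i) ^ 2 + ∑ j ∈ Finset.Iio i, (u j * g i) ^ 2
        ≤ (u i) ^ 2 * g i ^ 2 + (∑ j ∈ Finset.Iio i, (u j) ^ 2) * g i ^ 2 := by
          rw [h2]; exact add_le_add h1 le_rfl
      _ = ((u i) ^ 2 + ∑ j ∈ Finset.Iio i, (u j) ^ 2) * g i ^ 2 := by ring
      _ ≤ (∑ j, (u j) ^ 2) * g i ^ 2 :=
          mul_le_mul_of_nonneg_right h3 (sq_nonneg _)
  have hsum : (∑ i, (u i * φ' (s i) * g i) ^ 2)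
      + ∑ i, ∑ j ∈ Finset.Iio i, (u j * g i) ^ 2
      ≤ ∑ i, (∑ j, (u j) ^ 2) * g i ^ 2 := by
    rw [← Finset.sum_add_distrib]
    exact Finset.sum_le_sum fun i _ => hmain i
  have hRHS : (1 + ∑ j, (u j) ^ 2) * ∑ i, g i ^ 2
      = (∑ i, g i ^ 2) + ∑ i, (∑ j, (u j) ^ 2) * g i ^ 2 := by
    rw [add_mul, one_mul, Finset.mul_sum]
  linarith [hsum]
end

section
/- For the mean-field parameterization and u with i.i.d. symmetric standardized components of kurtosis κ, for any fixed z ∈ ℝ^d: E[‖t_λ(u) − z‖₂² (1 + ‖U‖_F)] ≤ (√(dκ) + κ√d + 1)‖m − z‖₂² + (2κ√d + 1)‖C‖_F², where U = diag(u₁²,…,u_d²). -/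
open MeasureTheory ProbabilityTheory

lemma cs_int {Ω : Type*} [MeasurableSpace Ω] {μ : Measure Ω} [IsProbabilityMeasure μ]
    {f g : Ω → ℝ} (hfm : AEStronglyMeasurable f μ) (hgm : AEStronglyMeasurable g μ)
    (hf0 : ∀ ω, 0 ≤ f ω) (hg0 : ∀ ω, 0 ≤ g ω)
    (hf2 : Integrable (fun ω => f ω ^ 2) μ) (hg2 : Integrable (fun ω => g ω ^ 2) μ) :
    ∫ ω, f ω * g ω ∂μ ≤ Real.sqrt (∫ ω, f ω ^ 2 ∂μ) * Real.sqrt (∫ ω, g ω ^ 2 ∂μ) := by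
  have hpq : (2:ℝ).HolderConjugate 2 := Real.HolderConjugate.two_two
  have hMf : MemLp f (ENNReal.ofReal 2) μ := by
    rw [show ENNReal.ofReal 2 = 2 by norm_num]
    exact (memLp_two_iff_integrable_sq hfm).2 hf2
  have hMg : MemLp g (ENNReal.ofReal 2) μ := by
    rw [show ENNReal.ofReal 2 = 2 by norm_num]
    exact (memLp_two_iff_integrable_sq hgm).2 hg2
  have h := integral_mul_le_Lp_mul_Lq_of_nonneg hpq
      (Filter.Eventually.of_forall hf0) (Filter.Eventually.of_forall hg0) hMf hMg
  have hr : ∀ x : ℝ, x ^ (2:ℝ) = x ^ 2 := fun x => by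
    rw [show (2:ℝ) = ((2:ℕ):ℝ) by norm_num, Real.rpow_natCast]
  simp only [hr] at h
  calc ∫ ω, f ω * g ω ∂μ ≤ (∫ a, f a ^ 2 ∂μ) ^ (1/(2:ℝ)) * (∫ a, g a ^ 2 ∂μ) ^ (1/(2:ℝ)) := h
    _ = _ := by rw [Real.sqrt_eq_rpow, Real.sqrt_eq_rpow]

/-- For the mean-field parameterization (`C = diag c`) and `u` with i.i.d.
symmetric standardized components of kurtosis `κ`, for any fixed `z`:
`E[‖t_λ(u) − z‖₂² (1 + ‖U‖_F)]
  ≤ (√(dκ) + κ√d + 1) ‖m − z‖₂² + (2κ√d + 1) ‖C‖_F²`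
where `‖U‖_F = sqrt (∑ i, uᵢ⁴)`. -/
theorem meanfield_u_identity
    {Ω : Type*} [MeasurableSpace Ω] {μ : Measure Ω} [IsProbabilityMeasure μ]
    {d : ℕ} (u : Ω → Fin d → ℝ) (κ : ℝ)
    (c m z : Fin d → ℝ)
    (hmeas : ∀ i, Measurable fun ω => u ω i)
    (hindep : iIndepFun (fun i ω => u ω i) μ)
    (hident : ∀ i j, IdentDistrib (fun ω => u ω i) (fun ω => u ω j) μ μ)
    (hint : ∀ i, ∀ k ≤ 4, Integrable (fun ω => (u ω i) ^ k) μ)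
    (hmean : ∀ i, ∫ ω, u ω i ∂μ = 0)
    (hvar : ∀ i, ∫ ω, (u ω i) ^ 2 ∂μ = 1)
    (hthird : ∀ i, ∫ ω, (u ω i) ^ 3 ∂μ = 0)
    (hfourth : ∀ i, ∫ ω, (u ω i) ^ 4 ∂μ = κ) :
    ∫ ω, (∑ i, (c i * u ω i + m i - z i) ^ 2) *
        (1 + Real.sqrt (∑ i, (u ω i) ^ 4)) ∂μ ≤
      (Real.sqrt (d * κ) + κ * Real.sqrt d + 1) * (∑ i, (m i - z i) ^ 2) +
        (2 * κ * Real.sqrt d + 1) * ∑ i, (c i) ^ 2 := by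
  rcases Nat.eq_zero_or_pos d with hd | hd
  · subst hd; simp
  have i0 : Fin d := ⟨0, hd⟩
  set S : Ω → ℝ := fun ω => Real.sqrt (∑ i, u ω i ^ 4) with hSdef
  have hnn : ∀ ω, (0:ℝ) ≤ ∑ i, u ω i ^ 4 := fun ω =>
    Finset.sum_nonneg fun i _ => by positivity
  have hS0 : ∀ ω, 0 ≤ S ω := fun ω => Real.sqrt_nonneg _
  have hS2 : ∀ ω, S ω ^ 2 = ∑ i, u ω i ^ 4 := fun ω => Real.sq_sqrt (hnn ω)
  have hSm : Measurable S :=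
    (Finset.measurable_sum Finset.univ fun i _ => (hmeas i).pow_const 4).sqrt
  have I1 : ∀ i, Integrable (fun ω => u ω i) μ := fun i => by
    simpa using hint i 1 (by norm_num)
  have I2 : ∀ i, Integrable (fun ω => u ω i ^ 2) μ := fun i => hint i 2 (by norm_num)
  have I4 : ∀ i, Integrable (fun ω => u ω i ^ 4) μ := fun i => hint i 4 (by norm_num)
  have ISq : Integrable (fun ω => S ω ^ 2) μ := by
    have : (fun ω => S ω ^ 2) = fun ω => ∑ i, u ω i ^ 4 := funext hS2
    rw [this]; exact integrable_finset_sum _ fun i _ => I4 i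
  have hIS2val : ∫ ω, S ω ^ 2 ∂μ = d * κ := by
    have : (fun ω => S ω ^ 2) = fun ω => ∑ i, u ω i ^ 4 := funext hS2
    rw [this, integral_finset_sum _ fun i _ => I4 i]
    simp [hfourth, Finset.sum_const, Finset.card_univ, nsmul_eq_mul]
  have IS : Integrable S μ := by
    have hb : Integrable (fun ω => (1 + S ω ^ 2) / 2) μ := by
      exact ((integrable_const (1:ℝ)).add ISq).div_const 2
    refine Integrable.mono' hb hSm.aestronglyMeasurable
      (Filter.Eventually.of_forall fun ω => ?_)
    rw [Real.norm_of_nonneg (hS0 ω)]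
    nlinarith [hS0 ω, sq_nonneg (S ω - 1)]
  have hκ1 : (1:ℝ) ≤ κ := by
    have h0 : 0 ≤ ∫ ω, (u ω i0 ^ 2 - 1) ^ 2 ∂μ := integral_nonneg fun ω => sq_nonneg _
    have heq : ∫ ω, (u ω i0 ^ 2 - 1) ^ 2 ∂μ = κ - 1 := by
      have h2 : Integrable (fun ω => 2 * u ω i0 ^ 2) μ := by exact (I2 i0).const_mul 2
      have h1 : Integrable (fun ω => u ω i0 ^ 4 - 2 * u ω i0 ^ 2) μ := by
        exact (I4 i0).sub h2
      have he : ∫ ω, (u ω i0 ^ 2 - 1) ^ 2 ∂μ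
          = ∫ ω, ((u ω i0 ^ 4 - 2 * u ω i0 ^ 2) + 1) ∂μ :=
        integral_congr_ae (Filter.Eventually.of_forall fun ω => by ring)
      rw [he, integral_add h1 (integrable_const 1),
        integral_sub (I4 i0) h2, integral_const_mul, hfourth, hvar]
      simp
      ring
    linarith
  have hκ0 : (0:ℝ) ≤ κ := le_trans zero_le_one hκ1
  have hd0 : (0:ℝ) ≤ (d:ℝ) := Nat.cast_nonneg d
  -- E S ≤ √(dκ)
  have hES : ∫ ω, S ω ∂μ ≤ Real.sqrt (d * κ) := by
    have h := cs_int (μ := μ) hSm.aestronglyMeasurable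
      (aestronglyMeasurable_const (b := (1:ℝ))) hS0 (fun _ => zero_le_one) ISq
      (by simp only [one_pow]; exact integrable_const (1:ℝ))
    simp [hIS2val] at h
    simpa using h
  -- E uᵢ² S ≤ κ √d
  have hU2S : ∀ i, ∫ ω, u ω i ^ 2 * S ω ∂μ ≤ κ * Real.sqrt d := fun i => by
    have hsq : Integrable (fun ω => (u ω i ^ 2) ^ 2) μ := by
      have : (fun ω => (u ω i ^ 2) ^ 2) = fun ω => u ω i ^ 4 := funext fun ω => by ring
      rw [this]; exact I4 i
    have h := cs_int (μ := μ) ((hmeas i).pow_const 2).aestronglyMeasurable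
      hSm.aestronglyMeasurable (fun ω => sq_nonneg _) hS0 hsq ISq
    have h4 : ∫ ω, (u ω i ^ 2) ^ 2 ∂μ = κ := by
      have : (fun ω => (u ω i ^ 2) ^ 2) = fun ω => u ω i ^ 4 := funext fun ω => by ring
      rw [this, hfourth]
    rw [h4, hIS2val] at h
    calc ∫ ω, u ω i ^ 2 * S ω ∂μ ≤ Real.sqrt κ * Real.sqrt ((d:ℝ) * κ) := h
      _ = κ * Real.sqrt d := by
        rw [Real.sqrt_mul hd0, ← mul_assoc, mul_comm (Real.sqrt κ) (Real.sqrt (d:ℝ)),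
          mul_assoc, Real.mul_self_sqrt hκ0, mul_comm]
  -- integrability of uᵢ² S
  have IU2S : ∀ i, Integrable (fun ω => u ω i ^ 2 * S ω) μ := fun i => by
    have hb : Integrable (fun ω => (u ω i ^ 4 + S ω ^ 2) / 2) μ := by
      exact ((I4 i).add ISq).div_const 2
    refine Integrable.mono' hb
      (((hmeas i).pow_const 2).mul hSm).aestronglyMeasurable
      (Filter.Eventually.of_forall fun ω => ?_)
    rw [Real.norm_of_nonneg (mul_nonneg (sq_nonneg _) (hS0 ω))]
    nlinarith [sq_nonneg (u ω i ^ 2 - S ω)]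
  -- X integrable and its integral
  have hq : ∀ i, Integrable (fun ω => (c i)^2 * u ω i ^ 2) μ := fun i => by
    exact (I2 i).const_mul _
  have hmu : ∀ i, Integrable (fun ω => (2 * c i * (m i - z i)) * u ω i) μ := fun i => by
    exact (I1 i).const_mul _
  have hlin : ∀ i, Integrable
      (fun ω => (2 * c i * (m i - z i)) * u ω i + (m i - z i)^2) μ := fun i => by
    exact (hmu i).add (integrable_const _)
  have IXi : ∀ i, Integrable (fun ω => (c i * u ω i + m i - z i) ^ 2) μ := fun i => by
    have he : (fun ω => (c i * u ω i + m i - z i) ^ 2)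
        = fun ω => (c i)^2 * u ω i ^ 2 + ((2 * c i * (m i - z i)) * u ω i + (m i - z i)^2) :=
      funext fun ω => by ring
    rw [he]
    exact (hq i).add (hlin i)
  have IX : Integrable (fun ω => ∑ i, (c i * u ω i + m i - z i) ^ 2) μ :=
    integrable_finset_sum _ fun i _ => IXi i
  have hIX : ∫ ω, ∑ i, (c i * u ω i + m i - z i) ^ 2 ∂μ
      = ∑ i, ((c i)^2 + (m i - z i)^2) := by
    rw [integral_finset_sum _ fun i _ => IXi i]
    refine Finset.sum_congr rfl fun i _ => ?_
    have he : ∫ ω, (c i * u ω i + m i - z i) ^ 2 ∂μ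
        = ∫ ω, ((c i)^2 * u ω i ^ 2 + ((2 * c i * (m i - z i)) * u ω i + (m i - z i)^2)) ∂μ :=
      integral_congr_ae (Filter.Eventually.of_forall fun ω => by ring)
    rw [he, integral_add (hq i) (hlin i),
      integral_add (hmu i) (integrable_const _),
      integral_const_mul, integral_const_mul, hvar, hmean]
    simp
  -- pointwise bound
  set F : Ω → ℝ := fun ω => (∑ i, (c i * u ω i + m i - z i) ^ 2)
      + ((∑ i, 2 * (c i)^2 * (u ω i ^ 2 * S ω)) + (2 * ∑ i, (m i - z i)^2) * S ω) with hFdef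
  have hpt : ∀ ω, (∑ i, (c i * u ω i + m i - z i) ^ 2) * (1 + S ω) ≤ F ω := by
    intro ω
    have hX_le : (∑ i, (c i * u ω i + m i - z i) ^ 2)
        ≤ ∑ i, (2 * (c i)^2 * u ω i ^ 2 + 2 * (m i - z i)^2) :=
      Finset.sum_le_sum fun i _ => by nlinarith [sq_nonneg (c i * u ω i - (m i - z i))]
    have hmul := mul_le_mul_of_nonneg_right hX_le (hS0 ω)
    have hsum : (∑ i, (2 * (c i)^2 * u ω i ^ 2 + 2 * (m i - z i)^2)) * S ω
        = (∑ i, 2 * (c i)^2 * (u ω i ^ 2 * S ω)) + (2 * ∑ i, (m i - z i)^2) * S ω := by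
      rw [Finset.sum_mul, Finset.mul_sum, Finset.sum_mul, ← Finset.sum_add_distrib]
      exact Finset.sum_congr rfl fun i _ => by ring
    calc (∑ i, (c i * u ω i + m i - z i) ^ 2) * (1 + S ω)
        = (∑ i, (c i * u ω i + m i - z i) ^ 2)
          + (∑ i, (c i * u ω i + m i - z i) ^ 2) * S ω := by ring
      _ ≤ (∑ i, (c i * u ω i + m i - z i) ^ 2)
          + (∑ i, (2 * (c i)^2 * u ω i ^ 2 + 2 * (m i - z i)^2)) * S ω := by linarith
      _ = F ω := by rw [hsum]
  have IM : Integrable (fun ω => ∑ i, 2 * (c i)^2 * (u ω i ^ 2 * S ω)) μ := by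
    exact integrable_finset_sum _ fun i _ => (IU2S i).const_mul _
  have IT : Integrable (fun ω => (2 * ∑ i, (m i - z i)^2) * S ω) μ := by
    exact IS.const_mul _
  have IMT : Integrable (fun ω => (∑ i, 2 * (c i)^2 * (u ω i ^ 2 * S ω))
      + (2 * ∑ i, (m i - z i)^2) * S ω) μ := by exact IM.add IT
  have IF : Integrable F μ := by exact IX.add IMT
  have ILHS : Integrable
      (fun ω => (∑ i, (c i * u ω i + m i - z i) ^ 2) * (1 + S ω)) μ := by
    refine Integrable.mono' IF ?_ (Filter.Eventually.of_forall fun ω => ?_)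
    · exact ((Finset.measurable_sum Finset.univ fun i _ =>
        (((measurable_const.mul (hmeas i)).add_const (m i)).sub_const (z i)).pow_const 2).mul
        (measurable_const.add hSm)).aestronglyMeasurable
    · rw [Real.norm_of_nonneg (mul_nonneg (Finset.sum_nonneg fun i _ => sq_nonneg _)
        (by linarith [hS0 ω]))]
      exact hpt ω
  have hIF : ∫ ω, F ω ∂μ = (∑ i, ((c i)^2 + (m i - z i)^2))
      + ((∑ i, 2 * (c i)^2 * ∫ ω, u ω i ^ 2 * S ω ∂μ)
        + (2 * ∑ i, (m i - z i)^2) * ∫ ω, S ω ∂μ) := by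
    simp only [hFdef]
    rw [integral_add IX IMT, integral_add IM IT,
      integral_finset_sum _ fun i _ => (IU2S i).const_mul _, hIX, integral_const_mul]
    congr 2
    exact Finset.sum_congr rfl fun i _ => integral_const_mul _ _
  -- final arithmetic
  have hsqrt : Real.sqrt ((d:ℝ) * κ) ≤ κ * Real.sqrt d := by
    rw [Real.sqrt_mul hd0]
    have hκs : Real.sqrt κ ≤ κ := by
      nlinarith [Real.sq_sqrt hκ0, Real.sqrt_nonneg κ, hκ1]
    calc Real.sqrt (d:ℝ) * Real.sqrt κ ≤ Real.sqrt (d:ℝ) * κ :=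
        mul_le_mul_of_nonneg_left hκs (Real.sqrt_nonneg _)
      _ = κ * Real.sqrt d := mul_comm _ _
  have hA0 : (0:ℝ) ≤ ∑ i, (m i - z i)^2 := Finset.sum_nonneg fun i _ => sq_nonneg _
  have hC0 : (0:ℝ) ≤ ∑ i, (c i)^2 := Finset.sum_nonneg fun i _ => sq_nonneg _
  have hES0 : 0 ≤ ∫ ω, S ω ∂μ := integral_nonneg hS0
  have hMsum : (∑ i, 2 * (c i)^2 * ∫ ω, u ω i ^ 2 * S ω ∂μ)
      ≤ (∑ i, (c i)^2) * (2 * κ * Real.sqrt d) := by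
    rw [Finset.sum_mul]
    refine Finset.sum_le_sum fun i _ => ?_
    have := mul_le_mul_of_nonneg_left (hU2S i) (by positivity : (0:ℝ) ≤ 2 * (c i)^2)
    nlinarith [sq_nonneg (c i)]
  calc ∫ ω, (∑ i, (c i * u ω i + m i - z i) ^ 2) * (1 + S ω) ∂μ
      ≤ ∫ ω, F ω ∂μ := integral_mono ILHS IF hpt
    _ = (∑ i, ((c i)^2 + (m i - z i)^2))
        + ((∑ i, 2 * (c i)^2 * ∫ ω, u ω i ^ 2 * S ω ∂μ)
          + (2 * ∑ i, (m i - z i)^2) * ∫ ω, S ω ∂μ) := hIF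
    _ ≤ (∑ i, ((c i)^2 + (m i - z i)^2))
        + ((∑ i, (c i)^2) * (2 * κ * Real.sqrt d)
          + (2 * ∑ i, (m i - z i)^2) * Real.sqrt ((d:ℝ) * κ)) := by
        have h2 : (2 * ∑ i, (m i - z i)^2) * ∫ ω, S ω ∂μ
            ≤ (2 * ∑ i, (m i - z i)^2) * Real.sqrt ((d:ℝ) * κ) :=
          mul_le_mul_of_nonneg_left hES (by linarith)
        linarith [hMsum]
    _ ≤ (Real.sqrt ((d:ℝ) * κ) + κ * Real.sqrt d + 1) * (∑ i, (m i - z i) ^ 2) +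
        (2 * κ * Real.sqrt d + 1) * ∑ i, (c i) ^ 2 := by
        rw [Finset.sum_add_distrib]
        nlinarith [mul_le_mul_of_nonneg_left hsqrt hA0]
end

section
/- If f : ℝ^d → ℝ is L-smooth (gradient L-Lipschitz) and z̄ is a stationary point of f, then for the affine reparameterization t_λ(u) = Cu + m with u satisfying the symmetric standardized assumptions with kurtosis κ ≥ 1: E[‖∇f(t_λ(u))‖₂² (1 + ‖u‖₂²)] ≤ L² (d + κ)(‖m − z̄‖₂² + ‖C‖_F²). -/
open MeasureTheory ProbabilityTheory

section aux
variable {Ω : Type*} [MeasurableSpace Ω] {μ : Measure Ω} [IsProbabilityMeasure μ]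
  {d : ℕ} {u : Ω → Fin d → ℝ} {κ : ℝ}
  (hmeas : ∀ i, Measurable fun ω => u ω i)
  (hindep : iIndepFun (fun i ω => u ω i) μ)
  (hint : ∀ i, ∀ k ≤ 4, Integrable (fun ω => (u ω i) ^ k) μ)
  (hmean : ∀ i, ∫ ω, u ω i ∂μ = 0)
  (hvar : ∀ i, ∫ ω, (u ω i) ^ 2 ∂μ = 1)
  (hthird : ∀ i, ∫ ω, (u ω i) ^ 3 ∂μ = 0)
  (hfourth : ∀ i, ∫ ω, (u ω i) ^ 4 ∂μ = κ)

set_option linter.unusedSectionVars false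

include hmeas hint in
lemma aux_int4 (j j' k : Fin d) :
    Integrable (fun ω => u ω j * u ω j' * u ω k ^ 2) μ := by
  have hg : Integrable (fun ω => (u ω j ^ 4 + u ω j' ^ 4 + 2 * u ω k ^ 4) / 4) μ :=
    (((hint j 4 le_rfl).add (hint j' 4 le_rfl)).add ((hint k 4 le_rfl).const_mul 2)).div_const 4
  refine hg.mono ?_ ?_
  · exact (((hmeas j).mul (hmeas j')).mul ((hmeas k).pow_const 2)).aestronglyMeasurable
  · filter_upwards with ω
    set a := u ω j; set b := u ω j'; set c := u ω k
    have h1 : |a * b * c ^ 2| ≤ (a ^ 4 + b ^ 4 + 2 * c ^ 4) / 4 := by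
      rw [abs_le]
      constructor <;> nlinarith [sq_nonneg (a*b - c^2), sq_nonneg (a*b + c^2),
        sq_nonneg (a^2 - b^2), sq_nonneg (a^2 - c^2), sq_nonneg (b^2 - c^2)]
    have h2 : (0:ℝ) ≤ (a ^ 4 + b ^ 4 + 2 * c ^ 4) / 4 := by positivity
    rw [Real.norm_eq_abs, Real.norm_eq_abs, abs_of_nonneg h2]; exact h1

include hmeas hint in
lemma aux_int3 (j k : Fin d) :
    Integrable (fun ω => u ω j * u ω k ^ 2) μ := by
  have hg : Integrable (fun ω => (u ω j ^ 2 + u ω k ^ 4) / 2) μ :=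
    ((hint j 2 (by norm_num)).add (hint k 4 le_rfl)).div_const 2
  refine hg.mono ?_ ?_
  · exact ((hmeas j).mul ((hmeas k).pow_const 2)).aestronglyMeasurable
  · filter_upwards with ω
    set a := u ω j; set c := u ω k
    have h1 : |a * c ^ 2| ≤ (a ^ 2 + c ^ 4) / 2 := by
      rw [abs_le]
      constructor <;> nlinarith [sq_nonneg (a - c^2), sq_nonneg (a + c^2)]
    have h2 : (0:ℝ) ≤ (a ^ 2 + c ^ 4) / 2 := by positivity
    rw [Real.norm_eq_abs, Real.norm_eq_abs, abs_of_nonneg h2]; exact h1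

include hmeas hint in
lemma aux_int2 (j j' : Fin d) :
    Integrable (fun ω => u ω j * u ω j') μ := by
  have hg : Integrable (fun ω => (u ω j ^ 2 + u ω j' ^ 2) / 2) μ :=
    ((hint j 2 (by norm_num)).add (hint j' 2 (by norm_num))).div_const 2
  refine hg.mono ?_ ?_
  · exact ((hmeas j).mul (hmeas j')).aestronglyMeasurable
  · filter_upwards with ω
    set a := u ω j; set b := u ω j'
    have h1 : |a * b| ≤ (a ^ 2 + b ^ 2) / 2 := by
      rw [abs_le]
      constructor <;> nlinarith [sq_nonneg (a - b), sq_nonneg (a + b)]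
    have h2 : (0:ℝ) ≤ (a ^ 2 + b ^ 2) / 2 := by positivity
    rw [Real.norm_eq_abs, Real.norm_eq_abs, abs_of_nonneg h2]; exact h1

include hmeas hindep hmean hvar in
lemma aux_M2 (j j' : Fin d) :
    ∫ ω, u ω j * u ω j' ∂μ = if j = j' then 1 else 0 := by
  rcases eq_or_ne j j' with rfl | h
  · rw [if_pos rfl, show (fun ω => u ω j * u ω j) = fun ω => u ω j ^ 2 from
      funext fun ω => by ring]
    exact hvar j
  · rw [if_neg h, (hindep.indepFun h).integral_fun_mul_eq_mul_integral (hmeas j).aestronglyMeasurable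
      (hmeas j').aestronglyMeasurable, hmean j, hmean j', mul_zero]

include hmeas hindep hmean hthird in
lemma aux_M3 (j k : Fin d) :
    ∫ ω, u ω j * u ω k ^ 2 ∂μ = 0 := by
  rcases eq_or_ne j k with rfl | h
  · rw [show (fun ω => u ω j * u ω j ^ 2) = fun ω => u ω j ^ 3 from
      funext fun ω => by ring]
    exact hthird j
  · have h2 : IndepFun (fun ω => u ω j) (fun ω => u ω k ^ 2) μ :=
      (hindep.indepFun h).comp measurable_id (measurable_id.pow_const 2)
    rw [h2.integral_fun_mul_eq_mul_integral (hmeas j).aestronglyMeasurable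
      ((hmeas k).pow_const 2).aestronglyMeasurable, hmean j, zero_mul]

include hmeas hindep hmean hvar hthird hfourth in
lemma aux_M4 (j j' k : Fin d) :
    ∫ ω, u ω j * u ω j' * u ω k ^ 2 ∂μ =
      if j = j' then (if j = k then κ else 1) else 0 := by
  rcases eq_or_ne j j' with rfl | hjj'
  · rw [if_pos rfl]
    rcases eq_or_ne j k with rfl | hjk
    · rw [if_pos rfl, show (fun ω => u ω j * u ω j * u ω j ^ 2) = fun ω => u ω j ^ 4 from
        funext fun ω => by ring]
      exact hfourth j
    · rw [if_neg hjk, show (fun ω => u ω j * u ω j * u ω k ^ 2)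
        = fun ω => u ω j ^ 2 * u ω k ^ 2 from funext fun ω => by ring]
      have h2 : IndepFun (fun ω => u ω j ^ 2) (fun ω => u ω k ^ 2) μ :=
        (hindep.indepFun hjk).comp (measurable_id.pow_const 2) (measurable_id.pow_const 2)
      rw [h2.integral_fun_mul_eq_mul_integral ((hmeas j).pow_const 2).aestronglyMeasurable
        ((hmeas k).pow_const 2).aestronglyMeasurable, hvar j, hvar k, mul_one]
  · rw [if_neg hjj']
    rcases eq_or_ne k j with rfl | hkj
    · rw [show (fun ω => u ω k * u ω j' * u ω k ^ 2)
        = fun ω => u ω k ^ 3 * u ω j' from funext fun ω => by ring]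
      have h2 : IndepFun (fun ω => u ω k ^ 3) (fun ω => u ω j') μ :=
        (hindep.indepFun hjj').comp (measurable_id.pow_const 3) measurable_id
      rw [h2.integral_fun_mul_eq_mul_integral ((hmeas k).pow_const 3).aestronglyMeasurable
        (hmeas j').aestronglyMeasurable, hthird k, zero_mul]
    rcases eq_or_ne k j' with rfl | hkj'
    · rw [show (fun ω => u ω j * u ω k * u ω k ^ 2)
        = fun ω => u ω j * u ω k ^ 3 from funext fun ω => by ring]
      have h2 : IndepFun (fun ω => u ω j) (fun ω => u ω k ^ 3) μ :=
        (hindep.indepFun hjj').comp measurable_id (measurable_id.pow_const 3)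
      rw [h2.integral_fun_mul_eq_mul_integral (hmeas j).aestronglyMeasurable
        ((hmeas k).pow_const 3).aestronglyMeasurable, hmean j, zero_mul]
    · have h1 : IndepFun ((fun ω => u ω j) * (fun ω => u ω j')) (fun ω => u ω k) μ :=
        hindep.indepFun_mul_left hmeas j j' k (Ne.symm hkj) (Ne.symm hkj')
      have h2 : IndepFun (fun ω => u ω j * u ω j') (fun ω => u ω k ^ 2) μ :=
        h1.comp measurable_id (measurable_id.pow_const 2)
      rw [h2.integral_fun_mul_eq_mul_integral ((hmeas j).mul (hmeas j')).aestronglyMeasurable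
        ((hmeas k).pow_const 2).aestronglyMeasurable,
        aux_M2 hmeas hindep hmean hvar j j', if_neg hjj', zero_mul]

include hmeas hindep hint hmean hvar hthird hfourth in
lemma aux_T1 (j j' : Fin d) :
    Integrable (fun ω => u ω j * u ω j' * (1 + ∑ k, u ω k ^ 2)) μ ∧
    ∫ ω, u ω j * u ω j' * (1 + ∑ k, u ω k ^ 2) ∂μ = if j = j' then ((d:ℝ) + κ) else 0 := by
  have hfe : (fun ω => u ω j * u ω j' * (1 + ∑ k, u ω k ^ 2))
      = fun ω => u ω j * u ω j' + ∑ k, u ω j * u ω j' * u ω k ^ 2 := by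
    funext ω; rw [mul_add, mul_one, Finset.mul_sum]
  have hi1 := aux_int2 hmeas hint j j'
  have hi2 : Integrable (fun ω => ∑ k, u ω j * u ω j' * u ω k ^ 2) μ :=
    integrable_finset_sum _ fun k _ => aux_int4 hmeas hint j j' k
  constructor
  · rw [hfe]; exact hi1.add hi2
  · rw [hfe, integral_add hi1 hi2, integral_finset_sum _ fun k _ => aux_int4 hmeas hint j j' k,
      aux_M2 hmeas hindep hmean hvar j j',
      Finset.sum_congr rfl fun k _ => aux_M4 hmeas hindep hmean hvar hthird hfourth j j' k]
    rcases eq_or_ne j j' with rfl | h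
    · simp only [eq_self_iff_true, if_true]
      have he : ∀ k : Fin d, (if j = k then κ else 1) = (if j = k then κ - 1 else 0) + 1 := by
        intro k; split <;> ring
      rw [Finset.sum_congr rfl fun k _ => he k, Finset.sum_add_distrib, Finset.sum_ite_eq,
        if_pos (Finset.mem_univ j), Finset.sum_const, Finset.card_univ, Fintype.card_fin]
      ring
    · simp [h]

include hmeas hindep hint hmean hthird in
lemma aux_T2 (j : Fin d) :
    Integrable (fun ω => u ω j * (1 + ∑ k, u ω k ^ 2)) μ ∧
    ∫ ω, u ω j * (1 + ∑ k, u ω k ^ 2) ∂μ = 0 := by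
  have hfe : (fun ω => u ω j * (1 + ∑ k, u ω k ^ 2))
      = fun ω => u ω j + ∑ k, u ω j * u ω k ^ 2 := by
    funext ω; rw [mul_add, mul_one, Finset.mul_sum]
  have hi1 : Integrable (fun ω => u ω j) μ := by simpa using hint j 1 (by norm_num)
  have hi2 : Integrable (fun ω => ∑ k, u ω j * u ω k ^ 2) μ :=
    integrable_finset_sum _ fun k _ => aux_int3 hmeas hint j k
  constructor
  · rw [hfe]; exact hi1.add hi2
  · rw [hfe, integral_add hi1 hi2, integral_finset_sum _ fun k _ => aux_int3 hmeas hint j k,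
      hmean j, Finset.sum_congr rfl fun k _ => aux_M3 hmeas hindep hmean hthird j k]
    simp

include hint hvar in
lemma aux_T3 :
    Integrable (fun ω => (1:ℝ) + ∑ k, u ω k ^ 2) μ ∧
    ∫ ω, (1:ℝ) + ∑ k, u ω k ^ 2 ∂μ = 1 + (d:ℝ) := by
  have hi2 : Integrable (fun ω => ∑ k, u ω k ^ 2) μ :=
    integrable_finset_sum _ fun k _ => hint k 2 (by norm_num)
  constructor
  · exact (integrable_const 1).add hi2
  · rw [integral_add (integrable_const 1) hi2,
      integral_finset_sum _ fun k _ => hint k 2 (by norm_num),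
      Finset.sum_congr rfl fun k _ => hvar k]
    simp

include hmeas hindep hint hmean hvar hthird hfourth in
lemma aux_main (c : Fin d → ℝ) (b : ℝ) :
    Integrable (fun ω => (∑ j, c j * u ω j + b) ^ 2 * (1 + ∑ k, u ω k ^ 2)) μ ∧
    ∫ ω, (∑ j, c j * u ω j + b) ^ 2 * (1 + ∑ k, u ω k ^ 2) ∂μ
      = ((d:ℝ) + κ) * (∑ j, c j ^ 2) + ((d:ℝ) + 1) * b ^ 2 := by
  have hfe : (fun ω => (∑ j, c j * u ω j + b) ^ 2 * (1 + ∑ k, u ω k ^ 2))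
      = fun ω => (∑ j, ∑ j', (c j * c j') * (u ω j * u ω j' * (1 + ∑ k, u ω k ^ 2)))
        + ((∑ j, (2 * b * c j) * (u ω j * (1 + ∑ k, u ω k ^ 2)))
          + b ^ 2 * (1 + ∑ k, u ω k ^ 2)) := by
    funext ω
    have h1 : ∑ j, ∑ j', (c j * c j') * (u ω j * u ω j' * (1 + ∑ k, u ω k ^ 2))
        = (∑ j, c j * u ω j) ^ 2 * (1 + ∑ k, u ω k ^ 2) := by
      rw [sq, Finset.sum_mul_sum, Finset.sum_mul]
      refine Finset.sum_congr rfl fun j _ => ?_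
      rw [Finset.sum_mul]
      exact Finset.sum_congr rfl fun j' _ => by ring
    have h2 : ∑ j, (2 * b * c j) * (u ω j * (1 + ∑ k, u ω k ^ 2))
        = 2 * b * (∑ j, c j * u ω j) * (1 + ∑ k, u ω k ^ 2) := by
      rw [Finset.mul_sum, Finset.sum_mul]
      exact Finset.sum_congr rfl fun j _ => by ring
    rw [h1, h2]
    ring
  have hT1 := fun j j' => aux_T1 hmeas hindep hint hmean hvar hthird hfourth j j'
  have hT2 := fun j => aux_T2 hmeas hindep hint hmean hthird j
  have hT3 := aux_T3 (u := u) hint hvar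
  have hi1 : Integrable (fun ω => ∑ j, ∑ j',
      (c j * c j') * (u ω j * u ω j' * (1 + ∑ k, u ω k ^ 2))) μ :=
    integrable_finset_sum _ fun j _ => integrable_finset_sum _ fun j' _ =>
      ((hT1 j j').1).const_mul _
  have hi2 : Integrable (fun ω => ∑ j, (2 * b * c j) * (u ω j * (1 + ∑ k, u ω k ^ 2))) μ :=
    integrable_finset_sum _ fun j _ => ((hT2 j).1).const_mul _
  have hi3 : Integrable (fun ω => b ^ 2 * (1 + ∑ k, u ω k ^ 2)) μ := hT3.1.const_mul _
  have hi23 : Integrable (fun ω => (∑ j, (2 * b * c j) * (u ω j * (1 + ∑ k, u ω k ^ 2)))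
      + b ^ 2 * (1 + ∑ k, u ω k ^ 2)) μ := hi2.add hi3
  constructor
  · rw [hfe]; exact hi1.add hi23
  · rw [hfe, integral_add hi1 hi23, integral_add hi2 hi3,
      integral_finset_sum _ fun j _ => integrable_finset_sum _ fun j' _ =>
        ((hT1 j j').1).const_mul _,
      Finset.sum_congr rfl fun j _ =>
        integral_finset_sum _ fun j' _ => ((hT1 j j').1).const_mul (c j * c j'),
      integral_finset_sum _ fun j _ => ((hT2 j).1).const_mul _]
    have e1 : ∀ j : Fin d, ∫ ω, (2 * b * c j) * (u ω j * (1 + ∑ k, u ω k ^ 2)) ∂μ = 0 := by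
      intro j; rw [integral_const_mul, (hT2 j).2, mul_zero]
    have e2 : ∀ j j' : Fin d, ∫ ω, (c j * c j') * (u ω j * u ω j' * (1 + ∑ k, u ω k ^ 2)) ∂μ
        = if j = j' then (c j * c j') * ((d:ℝ) + κ) else 0 := by
      intro j j'
      rw [integral_const_mul, (hT1 j j').2, mul_ite, mul_zero]
    rw [Finset.sum_congr rfl fun j _ => Finset.sum_congr rfl fun j' _ => e2 j j',
      Finset.sum_congr rfl fun j _ => e1 j, integral_const_mul, hT3.2]
    simp only [Finset.sum_ite_eq, Finset.mem_univ, if_true, Finset.sum_const, smul_zero]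
    rw [Finset.sum_congr rfl fun j (_ : j ∈ Finset.univ) =>
      show (c j * c j) * ((d:ℝ) + κ) = ((d:ℝ) + κ) * c j ^ 2 by ring, ← Finset.mul_sum]
    ring

end aux

/-- If `f` is `L`-smooth with stationary point `z̄`, then for the affine
reparameterization `t_λ(u) = C u + m` with `u` i.i.d. symmetric standardized
with kurtosis `κ ≥ 1`:
`E[‖∇f(t_λ(u))‖₂² (1 + ‖u‖₂²)] ≤ L² (d + κ) (‖m − z̄‖₂² + ‖C‖_F²)`. -/
theorem smooth_gradient_second_moment_upper_bound
    {Ω : Type*} [MeasurableSpace Ω] {μ : Measure Ω} [IsProbabilityMeasure μ]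
    {d : ℕ} (u : Ω → Fin d → ℝ) (κ L : ℝ)
    (f : EuclideanSpace ℝ (Fin d) → ℝ)
    (gradf : EuclideanSpace ℝ (Fin d) → EuclideanSpace ℝ (Fin d))
    (C : Matrix (Fin d) (Fin d) ℝ) (m : Fin d → ℝ)
    (zbar : EuclideanSpace ℝ (Fin d))
    (hgrad : ∀ x, HasGradientAt f (gradf x) x)
    (hsmooth : ∀ x y, ‖gradf x - gradf y‖ ≤ L * ‖x - y‖)
    (hstat : gradf zbar = 0)
    (hmeas : ∀ i, Measurable fun ω => u ω i)
    (hindep : iIndepFun (fun i ω => u ω i) μ)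
    (hident : ∀ i j, IdentDistrib (fun ω => u ω i) (fun ω => u ω j) μ μ)
    (hint : ∀ i, ∀ k ≤ 4, Integrable (fun ω => (u ω i) ^ k) μ)
    (hmean : ∀ i, ∫ ω, u ω i ∂μ = 0)
    (hvar : ∀ i, ∫ ω, (u ω i) ^ 2 ∂μ = 1)
    (hthird : ∀ i, ∫ ω, (u ω i) ^ 3 ∂μ = 0)
    (hfourth : ∀ i, ∫ ω, (u ω i) ^ 4 ∂μ = κ)
    (hκ : 1 ≤ κ) :
    ∫ ω, ‖gradf ((EuclideanSpace.equiv (Fin d) ℝ).symm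
            (C.mulVec (u ω) + m))‖ ^ 2 * (1 + ∑ j, (u ω j) ^ 2) ∂μ ≤
      L ^ 2 * ((d : ℝ) + κ) *
        ((∑ i, (m i - zbar i) ^ 2) + ∑ i, ∑ j, (C i j) ^ 2) := by
  have hmain := fun i : Fin d =>
    aux_main hmeas hindep hint hmean hvar hthird hfourth (fun j => C i j) (m i - zbar i)
  set D : Ω → ℝ := fun ω => L ^ 2 *
    ∑ i, ((∑ j, C i j * u ω j + (m i - zbar i)) ^ 2 * (1 + ∑ k, u ω k ^ 2)) with hD
  have hDint : Integrable D μ :=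
    (integrable_finset_sum _ fun i _ => (hmain i).1).const_mul _
  have hpt : ∀ ω, ‖gradf ((EuclideanSpace.equiv (Fin d) ℝ).symm
      (C.mulVec (u ω) + m))‖ ^ 2 * (1 + ∑ j, (u ω j) ^ 2) ≤ D ω := by
    intro ω
    set t : EuclideanSpace ℝ (Fin d) :=
      (EuclideanSpace.equiv (Fin d) ℝ).symm (C.mulVec (u ω) + m) with ht
    have hb : ‖gradf t‖ ≤ L * ‖t - zbar‖ := by
      simpa [hstat] using hsmooth t zbar
    have hnorm : ‖t - zbar‖ ^ 2 = ∑ i, (∑ j, C i j * u ω j + (m i - zbar i)) ^ 2 := by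
      rw [EuclideanSpace.norm_eq, Real.sq_sqrt (by positivity)]
      refine Finset.sum_congr rfl fun i _ => ?_
      have : (t - zbar) i = ∑ j, C i j * u ω j + (m i - zbar i) := by
        simp [ht, Matrix.mulVec, dotProduct, add_sub_assoc]
      rw [this, Real.norm_eq_abs, sq_abs]
    have hS : (0:ℝ) ≤ 1 + ∑ j, (u ω j) ^ 2 := by positivity
    calc ‖gradf t‖ ^ 2 * (1 + ∑ j, (u ω j) ^ 2)
        ≤ (L * ‖t - zbar‖) ^ 2 * (1 + ∑ j, (u ω j) ^ 2) :=
          mul_le_mul_of_nonneg_right (pow_le_pow_left₀ (norm_nonneg _) hb 2) hS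
      _ = L ^ 2 * (‖t - zbar‖ ^ 2 * (1 + ∑ j, (u ω j) ^ 2)) := by ring
      _ = D ω := by
          rw [hnorm, hD, Finset.sum_mul]
  have hle : ∫ ω, ‖gradf ((EuclideanSpace.equiv (Fin d) ℝ).symm
      (C.mulVec (u ω) + m))‖ ^ 2 * (1 + ∑ j, (u ω j) ^ 2) ∂μ ≤ ∫ ω, D ω ∂μ := by
    refine integral_mono_of_nonneg (ae_of_all _ fun ω => by positivity) hDint
      (ae_of_all _ hpt)
  refine hle.trans ?_
  have hDval : ∫ ω, D ω ∂μ = L ^ 2 * (((d:ℝ) + κ) * (∑ i, ∑ j, (C i j) ^ 2)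
      + ((d:ℝ) + 1) * ∑ i, (m i - zbar i) ^ 2) := by
    rw [hD, integral_const_mul, integral_finset_sum _ fun i _ => (hmain i).1,
      Finset.sum_congr rfl fun i _ => (hmain i).2, Finset.sum_add_distrib,
      ← Finset.mul_sum, ← Finset.mul_sum]
  rw [hDval]
  have hA : (0:ℝ) ≤ ∑ i, ∑ j, (C i j) ^ 2 :=
    Finset.sum_nonneg fun i _ => Finset.sum_nonneg fun j _ => sq_nonneg _
  have hB : (0:ℝ) ≤ ∑ i, (m i - zbar i) ^ 2 := Finset.sum_nonneg fun i _ => sq_nonneg _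
  have hL : (0:ℝ) ≤ L ^ 2 := sq_nonneg _
  nlinarith [mul_nonneg hL (mul_nonneg (sub_nonneg.2 hκ) hB)]
end
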